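/- arXiv:2110.08359 — 2 statements merged into one kernel-verified Lean document; each statement's English description precedes it below -/
import Mathlib

section
/- Let f : ℝⁿ → ℝ be continuously differentiable, let Ω be the box with projection proj_Ω, let x ∈ Ω, p ∈ ℝⁿ, and set x(α) = proj_Ω(x + αp) and ψ(α) = f(x(α)). Suppose α > 0 is a kink step with respect to index i and is not a kink step with respect to any index j ≠ i. Then the one-sided derivatives of ψ at α (the derivatives of ψ within [α, ∞) and within (−∞, α] at α) satisfy ψ'₊(α) − ψ'₋(α) = −p_i·∇_i f(x(α)); in particular the jump in the derivative of ψ at α has magnitude |p_i·∇_i f(x(α))|. -/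
open scoped Classical

noncomputable section

/-- Componentwise projection onto the box `[l, u]`. -/
def boxProj {n : ℕ} (l u : Fin n → ℝ) (x : Fin n → ℝ) : Fin n → ℝ :=
  fun i => if x i < l i then l i else if u i < x i then u i else x i

/-- The projected direction `P_y(p)` of `p` at `y`. -/
def projDir {n : ℕ} (l u : Fin n → ℝ) (y p : Fin n → ℝ) : Fin n → ℝ :=
  fun i => if (y i = l i ∧ p i < 0) ∨ (y i = u i ∧ 0 < p i) then 0 else p i

/-- The projected path `α ↦ proj_Ω(x + α p)`. -/
def boxPath {n : ℕ} (l u x p : Fin n → ℝ) (α : ℝ) : Fin n → ℝ :=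
  boxProj l u (fun i => x i + α * p i)

/-- `α` is a kink step with respect to index `i`. -/
def IsKink {n : ℕ} (l u x p : Fin n → ℝ) (α : ℝ) (i : Fin n) : Prop :=
  (x i + α * p i = l i ∧ p i < 0) ∨ (x i + α * p i = u i ∧ 0 < p i)

/-- The vector `P⁻_{x(α)}(p)`. -/
def projDirMinus {n : ℕ} (l u x p : Fin n → ℝ) (α : ℝ) : Fin n → ℝ :=
  fun i => if IsKink l u x p α i then p i else projDir l u (boxPath l u x p α) p i

/-- The right derivative `ψ'₊(α) = ∇f(x(α))ᵀ P_{x(α)}(p)`. -/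
def psiDp {n : ℕ} (f : (Fin n → ℝ) → ℝ) (l u x p : Fin n → ℝ) (α : ℝ) : ℝ :=
  fderiv ℝ f (boxPath l u x p α) (projDir l u (boxPath l u x p α) p)

/-- The left derivative `ψ'₋(α) = ∇f(x(α))ᵀ P⁻_{x(α)}(p)`. -/
def psiDm {n : ℕ} (f : (Fin n → ℝ) → ℝ) (l u x p : Fin n → ℝ) (α : ℝ) : ℝ :=
  fderiv ℝ f (boxPath l u x p α) (projDirMinus l u x p α)

/-- `α` is a quasi-Wolfe step for the path `α ↦ proj_Ω(x + α p)`. -/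
def QuasiWolfeStep {n : ℕ} (f : (Fin n → ℝ) → ℝ) (l u x p : Fin n → ℝ)
    (ηA ηW α : ℝ) : Prop :=
  0 < α ∧
  f (boxPath l u x p α) ≤ f (boxPath l u x p 0) + α * ηA * psiDp f l u x p 0 ∧
  (|psiDm f l u x p α| ≤ ηW * |psiDp f l u x p 0| ∨
   |psiDp f l u x p α| ≤ ηW * |psiDp f l u x p 0| ∨
   (psiDm f l u x p α ≠ psiDp f l u x p α ∧
     psiDm f l u x p α ≤ 0 ∧ 0 ≤ psiDp f l u x p α))

/-- The `i`-th component of the gradient of `f` at `y`. -/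
def gradComp {n : ℕ} (f : (Fin n → ℝ) → ℝ) (y : Fin n → ℝ) (i : Fin n) : ℝ :=
  fderiv ℝ f y (Pi.single i 1)

/-- Membership of `i` in the working set at `y` with parameter `ε`. -/
def InWS {n : ℕ} (f : (Fin n → ℝ) → ℝ) (l u y : Fin n → ℝ) (ε : ℝ) (i : Fin n) : Prop :=
  (y i ≤ l i + ε ∧ 0 < gradComp f y i) ∨ (u i - ε ≤ y i ∧ gradComp f y i < 0)

/-- The norm `‖Πᵀ∇f(y)‖` of the gradient projected off the working set. -/
def projGradNorm {n : ℕ} (f : (Fin n → ℝ) → ℝ) (l u y : Fin n → ℝ) (ε : ℝ) : ℝ :=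
  Real.sqrt (∑ i, (if InWS f l u y ε i then 0 else gradComp f y i) ^ 2)

/-- Euclidean norm on `Fin n → ℝ`. -/
def euclNorm {n : ℕ} (v : Fin n → ℝ) : ℝ :=
  Real.sqrt (∑ i, v i ^ 2)

end

open Topology Filter

/-- **Jump in the derivative at a kink step** (Section 3.2): if `α > 0` is a kink step
with respect to `i` and no other index, then the one-sided derivatives of
`ψ(β) = f(proj_Ω(x + βp))` at `α` exist and satisfy
`ψ'₊(α) − ψ'₋(α) = −p_i·∇_i f(x(α))`; in particular the jump has magnitude
`|p_i·∇_i f(x(α))|`. -/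
theorem psi_derivative_jump {n : ℕ} (f : (Fin n → ℝ) → ℝ) (l u x p : Fin n → ℝ)
    (hf : ContDiff ℝ 1 f)
    (hlu : ∀ i, l i ≤ u i) (hx : ∀ i, l i ≤ x i ∧ x i ≤ u i)
    (α : ℝ) (hα : 0 < α) (i : Fin n)
    (hki : IsKink l u x p α i)
    (honly : ∀ j : Fin n, j ≠ i → ¬ IsKink l u x p α j) :
    ∃ Dp Dm : ℝ,
      HasDerivWithinAt (fun β => f (boxPath l u x p β)) Dp (Set.Ici α) α ∧
      HasDerivWithinAt (fun β => f (boxPath l u x p β)) Dm (Set.Iic α) α ∧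
      Dp - Dm = -(p i * gradComp f (boxPath l u x p α) i) ∧
      |Dp - Dm| = |p i * gradComp f (boxPath l u x p α) i| := by
  classical
  have haff : ∀ j : Fin n, HasDerivAt (fun β : ℝ => x j + β * p j) (p j) α :=
    fun j => (hasDerivAt_mul_const (p j)).const_add (x j)
  have hcont : ∀ j : Fin n, Continuous (fun β : ℝ => x j + β * p j) :=
    fun j => continuous_const.add (continuous_id.mul continuous_const)
  have hbp : ∀ (β : ℝ) (j : Fin n), boxPath l u x p β j =
      if x j + β * p j < l j then l j else if u j < x j + β * p j then u j
      else x j + β * p j := fun β j => rfl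
  set dP : Fin n → ℝ :=
    fun j => if l j < x j + α * p j ∧ x j + α * p j < u j then p j else 0 with hdP
  set dM : Fin n → ℝ := fun j => if j = i then p j else dP j with hdM
  have hdPi : dP i = 0 := by
    rw [hdP]
    simp only
    rw [if_neg]
    rcases hki with ⟨h1, _⟩ | ⟨h1, _⟩
    · rintro ⟨hl, -⟩; rw [h1] at hl; exact lt_irrefl _ hl
    · rintro ⟨-, hr⟩; rw [h1] at hr; exact lt_irrefl _ hr
  have comp : ∀ j : Fin n,
      HasDerivWithinAt (fun β => boxPath l u x p β j) (dP j) (Set.Ici α) α ∧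
      HasDerivWithinAt (fun β => boxPath l u x p β j) (dM j) (Set.Iic α) α := by
    intro j
    by_cases hj : j = i
    · subst hj
      have hMj : dM j = p j := if_pos rfl
      rcases hki with ⟨h1, h2⟩ | ⟨h1, h2⟩
      · -- lower kink : x j + α p j = l j, p j < 0
        have hαp : α * p j < 0 := mul_neg_of_pos_of_neg hα h2
        have hxu := (hx j).2
        have hlult : l j < u j := by linarith [h1]
        constructor
        · -- right derivative 0
          rw [hdPi]
          have heq : ∀ β ∈ Set.Ici α, boxPath l u x p β j = l j := by
            intro β hβ
            have hprod : (β - α) * p j ≤ 0 :=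
              mul_nonpos_of_nonneg_of_nonpos (sub_nonneg.2 hβ) h2.le
            have hcb : x j + β * p j ≤ l j := by nlinarith
            rw [hbp]
            split_ifs <;> linarith [hlu j]
          exact (hasDerivWithinAt_const α _ (l j)).congr heq (heq α Set.self_mem_Ici)
        · rw [hMj]
          have e1 : ∀ᶠ β in 𝓝[Set.Iic α] α, x j + β * p j < u j :=
            (((hcont j).continuousAt.tendsto).eventually_lt_const
              (by rw [h1]; exact hlult)).filter_mono nhdsWithin_le_nhds
          have e2 : ∀ᶠ β in 𝓝[Set.Iic α] α, l j ≤ x j + β * p j := by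
            filter_upwards [self_mem_nhdsWithin] with β hβ
            have hprod : (α - β) * p j ≤ 0 :=
              mul_nonpos_of_nonneg_of_nonpos (sub_nonneg.2 hβ) h2.le
            nlinarith
          have heq : (fun β => boxPath l u x p β j) =ᶠ[𝓝[Set.Iic α] α]
              fun β => x j + β * p j := by
            filter_upwards [e1, e2] with β hb1 hb2
            rw [hbp]; split_ifs <;> linarith [hlu j]
          exact ((haff j).hasDerivWithinAt).congr_of_eventuallyEq heq
            (by rw [hbp]; split_ifs <;> linarith [hlu j])
      · -- upper kink : x j + α p j = u j, 0 < p j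
        have hαp : 0 < α * p j := mul_pos hα h2
        have hxl := (hx j).1
        have hlult : l j < u j := by linarith [h1]
        constructor
        · rw [hdPi]
          have heq : ∀ β ∈ Set.Ici α, boxPath l u x p β j = u j := by
            intro β hβ
            have hprod : 0 ≤ (β - α) * p j := mul_nonneg (sub_nonneg.2 hβ) h2.le
            have hcb : u j ≤ x j + β * p j := by nlinarith
            rw [hbp]
            split_ifs <;> linarith [hlu j]
          exact (hasDerivWithinAt_const α _ (u j)).congr heq (heq α Set.self_mem_Ici)
        · rw [hMj]
          have e1 : ∀ᶠ β in 𝓝[Set.Iic α] α, l j < x j + β * p j :=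
            (((hcont j).continuousAt.tendsto).eventually_const_lt
              (by rw [h1]; exact hlult)).filter_mono nhdsWithin_le_nhds
          have e2 : ∀ᶠ β in 𝓝[Set.Iic α] α, x j + β * p j ≤ u j := by
            filter_upwards [self_mem_nhdsWithin] with β hβ
            have hprod : 0 ≤ (α - β) * p j := mul_nonneg (sub_nonneg.2 hβ) h2.le
            nlinarith
          have heq : (fun β => boxPath l u x p β j) =ᶠ[𝓝[Set.Iic α] α]
              fun β => x j + β * p j := by
            filter_upwards [e1, e2] with β hb1 hb2
            rw [hbp]; split_ifs <;> linarith [hlu j]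
          exact ((haff j).hasDerivWithinAt).congr_of_eventuallyEq heq
            (by rw [hbp]; split_ifs <;> linarith [hlu j])
    · -- j ≠ i : two-sided derivative dP j
      have hMj : dM j = dP j := if_neg hj
      suffices h : HasDerivAt (fun β => boxPath l u x p β j) (dP j) α by
        exact ⟨h.hasDerivWithinAt, hMj ▸ h.hasDerivWithinAt⟩
      by_cases hp0 : p j = 0
      · have hPj : dP j = 0 := by rw [hdP]; simp only; split_ifs <;> simp [hp0]
        rw [hPj]
        have heq : (fun β => boxPath l u x p β j) = fun _ => boxPath l u x p α j := by
          funext β; rw [hbp, hbp]; simp [hp0]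
        rw [heq]
        exact hasDerivAt_const α _
      · rcases lt_trichotomy (x j + α * p j) (l j) with hv | hv | hv
        · have hPj : dP j = 0 := by
            rw [hdP]; simp only; rw [if_neg]; rintro ⟨hl, -⟩; linarith
          rw [hPj]
          have e : ∀ᶠ β in 𝓝 α, x j + β * p j < l j :=
            ((hcont j).continuousAt.tendsto).eventually_lt_const hv
          have heq : (fun β => boxPath l u x p β j) =ᶠ[𝓝 α] fun _ => l j := by
            filter_upwards [e] with β hb
            rw [hbp]; split_ifs <;> linarith [hlu j]
          exact (hasDerivAt_const α (l j)).congr_of_eventuallyEq heq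
        · rcases lt_trichotomy (p j) 0 with hp | hp | hp
          · exact absurd (Or.inl ⟨hv, hp⟩) (honly j hj)
          · exact absurd hp hp0
          · exfalso
            have := (hx j).1
            have : 0 < α * p j := mul_pos hα hp
            linarith
        · rcases lt_trichotomy (x j + α * p j) (u j) with hv2 | hv2 | hv2
          · have hPj : dP j = p j := by rw [hdP]; simp only; exact if_pos ⟨hv, hv2⟩
            rw [hPj]
            have e1 : ∀ᶠ β in 𝓝 α, l j < x j + β * p j :=
              ((hcont j).continuousAt.tendsto).eventually_const_lt hv
            have e2 : ∀ᶠ β in 𝓝 α, x j + β * p j < u j :=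
              ((hcont j).continuousAt.tendsto).eventually_lt_const hv2
            have heq : (fun β => boxPath l u x p β j) =ᶠ[𝓝 α]
                fun β => x j + β * p j := by
              filter_upwards [e1, e2] with β hb1 hb2
              rw [hbp]; split_ifs <;> linarith [hlu j]
            exact (haff j).congr_of_eventuallyEq heq
          · rcases lt_trichotomy (p j) 0 with hp | hp | hp
            · exfalso
              have := (hx j).2
              have : α * p j < 0 := mul_neg_of_pos_of_neg hα hp
              linarith
            · exact absurd hp hp0
            · exact absurd (Or.inr ⟨hv2, hp⟩) (honly j hj)
          · have hPj : dP j = 0 := by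
              rw [hdP]; simp only; rw [if_neg]; rintro ⟨-, hr⟩; linarith
            rw [hPj]
            have e : ∀ᶠ β in 𝓝 α, u j < x j + β * p j :=
              ((hcont j).continuousAt.tendsto).eventually_const_lt hv2
            have heq : (fun β => boxPath l u x p β j) =ᶠ[𝓝 α] fun _ => u j := by
              filter_upwards [e] with β hb
              rw [hbp]; split_ifs <;> linarith [hlu j]
            exact (hasDerivAt_const α (u j)).congr_of_eventuallyEq heq
  have hfd : HasFDerivAt f (fderiv ℝ f (boxPath l u x p α)) (boxPath l u x p α) :=
    ((hf.differentiable one_ne_zero) (boxPath l u x p α)).hasFDerivAt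
  have hkey : fderiv ℝ f (boxPath l u x p α) dP - fderiv ℝ f (boxPath l u x p α) dM
      = -(p i * gradComp f (boxPath l u x p α) i) := by
    rw [← map_sub]
    have hvec : dP - dM = (-(p i)) • (Pi.single i 1 : Fin n → ℝ) := by
      funext j
      by_cases hj : j = i
      · subst hj
        simp [hdM, hdPi, Pi.single_apply]
      · simp [hdM, hj, Pi.single_apply, sub_self]
    rw [hvec, map_smul]
    simp only [gradComp, smul_eq_mul, neg_mul]
  refine ⟨fderiv ℝ f (boxPath l u x p α) dP, fderiv ℝ f (boxPath l u x p α) dM,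
    hfd.comp_hasDerivWithinAt α (hasDerivWithinAt_pi.2 fun j => (comp j).1),
    hfd.comp_hasDerivWithinAt α (hasDerivWithinAt_pi.2 fun j => (comp j).2),
    hkey, by rw [hkey, abs_neg]⟩
end

section
/- Let f : ℝⁿ → ℝ be continuously differentiable, let Ω be the box, let x ∈ Ω, ε ≥ 0, and let W be the working set at x with parameter ε, i.e., W = {i : (x_i ≤ ℓ_i + ε and ∇_i f(x) > 0) or (x_i ≥ u_i − ε and ∇_i f(x) < 0)}. Let d ∈ ℝⁿ satisfy d_i = 0 for every i ∈ W, and define p ∈ ℝⁿ by p_i = max{d_i, 0} if x_i ≤ ℓ_i + ε; p_i = min{d_i, 0} if x_i > ℓ_i + ε and x_i ≥ u_i − ε; and p_i = d_i otherwise. Then ∇f(x)ᵀp ≤ ∇f(x)ᵀd; in particular, if ∇f(x)ᵀd < 0 then ∇f(x)ᵀp < 0, so p is a descent direction for f at x. -/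
open scoped Classical

lemma clm_apply_eq_sum {n : ℕ} (L : (Fin n → ℝ) →L[ℝ] ℝ) (v : Fin n → ℝ) :
    L v = ∑ i, v i * L (Pi.single i 1) := by
  have hv : v = ∑ i, v i • (Pi.single i 1 : Fin n → ℝ) := by
    have := Finset.univ_sum_single v
    rw [← this]
    congr 1; ext i; simp [Pi.single_apply, smul_eq_mul]
  conv_lhs => rw [hv]
  simp [smul_eq_mul]

/-- **The modified direction retains descent** (Section 4.1): if `d_i = 0` on the
working set and `p` is obtained from `d` by the componentwise modification of
Algorithm 3, then `∇f(x)ᵀp ≤ ∇f(x)ᵀd`; in particular if `d` is a descent direction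
then so is `p`. -/
theorem modified_direction_descent {n : ℕ} (f : (Fin n → ℝ) → ℝ)
    (l u x : Fin n → ℝ) (ε : ℝ)
    (hf : ContDiff ℝ 1 f)
    (hlu : ∀ i, l i ≤ u i) (hε : 0 ≤ ε)
    (hx : ∀ i, l i ≤ x i ∧ x i ≤ u i)
    (d p : Fin n → ℝ)
    (hdW : ∀ i, InWS f l u x ε i → d i = 0)
    (hp : ∀ i, p i = if x i ≤ l i + ε then max (d i) 0
                     else if u i - ε ≤ x i then min (d i) 0 else d i) :
    fderiv ℝ f x p ≤ fderiv ℝ f x d ∧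
    (fderiv ℝ f x d < 0 → fderiv ℝ f x p < 0) := by
  have key : fderiv ℝ f x p ≤ fderiv ℝ f x d := by
    rw [clm_apply_eq_sum (fderiv ℝ f x) p, clm_apply_eq_sum (fderiv ℝ f x) d]
    apply Finset.sum_le_sum
    intro i _
    set g : ℝ := (fderiv ℝ f x) (Pi.single i 1) with hg
    have hgc : gradComp f x i = g := rfl
    rw [hp i]
    by_cases h1 : x i ≤ l i + ε
    · simp only [if_pos h1]
      rcases le_or_gt 0 (d i) with hd | hd
      · rw [max_eq_left hd]
      · rw [max_eq_right hd.le]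
        have hgle : g ≤ 0 := by
          by_contra hgp
          push_neg at hgp
          have : d i = 0 := hdW i (Or.inl ⟨h1, by rwa [hgc]⟩)
          exact absurd this (ne_of_lt hd)
        rw [zero_mul]
        exact mul_nonneg_iff.2 (Or.inr ⟨hd.le, hgle⟩)
    · simp only [if_neg h1]
      by_cases h2 : u i - ε ≤ x i
      · simp only [if_pos h2]
        rcases le_or_gt (d i) 0 with hd | hd
        · rw [min_eq_left hd]
        · rw [min_eq_right hd.le]
          have hgge : 0 ≤ g := by
            by_contra hgp
            push_neg at hgp
            have : d i = 0 := hdW i (Or.inr ⟨h2, by rwa [hgc]⟩)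
            exact absurd this (ne_of_gt hd)
          rw [zero_mul]
          exact mul_nonneg hd.le hgge
      · simp [h2]
  exact ⟨key, fun h => lt_of_le_of_lt key h⟩
end
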